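/- arXiv:1605.02103 — 5 statements merged into one kernel-verified Lean document; each statement's English description precedes it below -/
import Mathlib

section
/- Let r ≥ 1, let ~ be an equivalence relation on {1,…,r}, and let ℕ = A₁ ⊔ … ⊔ A_r be a partition of the natural numbers into finitely many pairwise disjoint infinite sets. Assume that whenever the set (A_i + 1) ∩ A_j is infinite, one has i ~ j. Then ~ has exactly one equivalence class. -/
/-- If ℕ is partitioned into finitely many pairwise disjoint infinite sets
`A 1, …, A r`, `~` is an equivalence relation on `Fin r`, and `i ~ j` whenever
`(A i + 1) ∩ A j` is infinite, then `~` has exactly one equivalence class. -/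
theorem one_equivalence_class_of_partition
    {r : ℕ} (hr : 1 ≤ r) (s : Setoid (Fin r)) (A : Fin r → Set ℕ)
    (hdisj : Pairwise fun i j => Disjoint (A i) (A j))
    (hcover : ∀ n : ℕ, ∃ i, n ∈ A i)
    (hinf : ∀ i, (A i).Infinite)
    (hstep : ∀ i j, (((fun n => n + 1) '' A i) ∩ A j).Infinite → s.r i j) :
    ∀ i j, s.r i j := by
  classical
  have i₀ : Fin r := ⟨0, hr⟩
  -- sets of n in A i with n+1 in A j, for non-related i j, are finite
  have hF : ∀ i j : Fin r, ¬ s.r i j → {n | n ∈ A i ∧ n + 1 ∈ A j}.Finite := by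
    intro i j hij
    by_contra hf
    apply hij
    apply hstep
    have hsub : (fun n => n + 1) '' {n | n ∈ A i ∧ n + 1 ∈ A j} ⊆
        ((fun n => n + 1) '' A i) ∩ A j := by
      rintro m ⟨n, ⟨hn1, hn2⟩, rfl⟩
      exact ⟨⟨n, hn1, rfl⟩, hn2⟩
    have hinf' : Set.Infinite {n | n ∈ A i ∧ n + 1 ∈ A j} := hf
    exact Set.Infinite.mono hsub
      (hinf'.image (Set.injOn_of_injective (fun a b h => by omega)))
  -- key claim: everything is related to i₀
  have key : ∀ j, s.r i₀ j := by
    by_contra h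
    push_neg at h
    obtain ⟨j₀, hj₀⟩ := h
    set B : Set ℕ := {n | ∃ j, s.r i₀ j ∧ n ∈ A j} with hBdef
    -- the boundary set is finite
    have hS : {n | n ∈ B ∧ n + 1 ∉ B}.Finite := by
      have hsub : {n | n ∈ B ∧ n + 1 ∉ B} ⊆
          ⋃ i : Fin r, ⋃ j : Fin r,
            if s.r i j then (∅ : Set ℕ) else {n | n ∈ A i ∧ n + 1 ∈ A j} := by
        rintro n ⟨⟨i, hi, hni⟩, hn1⟩
        obtain ⟨j, hj⟩ := hcover (n + 1)
        have hij : ¬ s.r i j := by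
          intro hrel
          exact hn1 ⟨j, s.iseqv.trans hi hrel, hj⟩
        refine Set.mem_iUnion.mpr ⟨i, Set.mem_iUnion.mpr ⟨j, ?_⟩⟩
        rw [if_neg hij]
        exact ⟨hni, hj⟩
      refine Set.Finite.subset ?_ hsub
      refine Set.finite_iUnion fun i => Set.finite_iUnion fun j => ?_
      by_cases hij : s.r i j
      · rw [if_pos hij]; exact Set.finite_empty
      · rw [if_neg hij]; exact hF i j hij
    obtain ⟨N, hN⟩ := hS.bddAbove
    have hBinf : B.Infinite := by
      refine (hinf i₀).mono fun n hn => ⟨i₀, s.iseqv.refl i₀, hn⟩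
    obtain ⟨m, hmB, hmN⟩ := hBinf.exists_gt N
    have hall : ∀ n, m ≤ n → n ∈ B := by
      intro n hn
      induction n, hn using Nat.le_induction with
      | base => exact hmB
      | succ n hmn ih =>
        by_contra hc
        have : n ∈ {n | n ∈ B ∧ n + 1 ∉ B} := ⟨ih, hc⟩
        have := hN this
        omega
    -- A j₀ ⊆ [0, m), contradiction with infiniteness
    have : A j₀ ⊆ {n | n < m} := by
      intro n hn
      by_contra hc
      simp only [Set.mem_setOf_eq, not_lt] at hc
      obtain ⟨j, hj, hnj⟩ := hall n hc
      have : j = j₀ := by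
        by_contra hne
        exact (hdisj hne).ne_of_mem hnj hn rfl
      exact hj₀ (this ▸ hj)
    exact hinf j₀ ((Set.finite_Iio m).subset this)
  intro i j
  exact s.iseqv.trans (s.iseqv.symm (key i)) (key j)
end

section
/- Let M be the adjacency matrix of an almost semisimple directed graph Γ of growth λ > 1, and let v be a vertex of large growth. Then there exists c > 0 such that for all n ≥ 0, the number of directed paths of length n starting at v satisfies c⁻¹·λⁿ ≤ #{paths of length n from v} ≤ c·λⁿ. -/
open Filter

/-- The number of directed paths of length `n` starting at vertex `v`, for the graph
with adjacency matrix `M` (with multiplicities): `(Mⁿ 𝟙)_v`. -/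
def pathCount {V : Type*} [Fintype V] [DecidableEq V] (M : Matrix V V ℕ) (v : V) (n : ℕ) : ℕ :=
  (M ^ n).mulVec (fun _ => 1) v

/-- A finite directed graph with adjacency matrix `M` is almost semisimple of growth
`lam > 1` with initial vertex `v0` if every vertex is reachable from `v0`, the largest
modulus of the (complex) eigenvalues of `M` is `lam`, and every eigenvalue of modulus
`lam` has equal geometric and algebraic multiplicity (no nontrivial Jordan blocks:
`ker (M − μ)² = ker (M − μ)`). -/
structure AlmostSemisimple {V : Type*} [Fintype V] [DecidableEq V]
    (M : Matrix V V ℕ) (v0 : V) (lam : ℝ) : Prop where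
  growth_gt_one : 1 < lam
  accessible : ∀ v : V, ∃ n : ℕ, (M ^ n) v0 v ≠ 0
  eigen_le : ∀ μ : ℂ, (Matrix.charpoly (M.map (Nat.cast : ℕ → ℂ))).IsRoot μ →
    ‖μ‖ ≤ lam
  eigen_top : ∃ μ : ℂ, (Matrix.charpoly (M.map (Nat.cast : ℕ → ℂ))).IsRoot μ ∧
    ‖μ‖ = lam
  semisimple_top : ∀ μ : ℂ, ‖μ‖ = lam →
    ∀ x : V → ℂ,
      (M.map (Nat.cast : ℕ → ℂ) - μ • 1).mulVec
          ((M.map (Nat.cast : ℕ → ℂ) - μ • 1).mulVec x) = 0 →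
      (M.map (Nat.cast : ℕ → ℂ) - μ • 1).mulVec x = 0

/-- `ρ1 v` is the Cesàro limit `ρ(𝟙)_v = lim_N (1/N) Σ_{n<N} (Mⁿ𝟙)_v / lamⁿ`. -/
def IsRho1 {V : Type*} [Fintype V] [DecidableEq V] (M : Matrix V V ℕ) (lam : ℝ) (ρ1 : V → ℝ) : Prop :=
  ∀ v : V, Tendsto
    (fun N : ℕ => (N : ℝ)⁻¹ * ∑ n ∈ Finset.range N, (pathCount M v n : ℝ) / lam ^ n)
    atTop (nhds (ρ1 v))


/-!
Upper bound: `ℂ^V` is the sum of the generalized eigenspaces of `M`. On one with `‖μ‖ < λ`,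
write `M = μ + N` with `N` nilpotent there; the binomial expansion gives growth `O(nᵏ ‖μ‖ⁿ)`,
which is `o(λⁿ)`. For `‖μ‖ = λ` semisimplicity makes the generalized eigenspace an eigenspace,
on which `Mⁿ` grows exactly like `λⁿ`. Hence `Mⁿ𝟙 = O(λⁿ)`.

Lower bound: Cesàro averages are insensitive to a shift of the sequence, so the limit
`ρ = ρ(𝟙) ≥ 0` satisfies `Mρ = λρ`. Then `λⁿ ρ_v = (Mⁿρ)_v ≤ (Mⁿ𝟙)_v · Σ_u ρ_u`.
-/

open Finset Asymptotics Topology Matrix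

theorem tendsto_cesaro_shift {E : Type*} [AddCommGroup E] [Module ℝ E] [TopologicalSpace E]
    [IsTopologicalAddGroup E] [ContinuousSMul ℝ E] {a : ℕ → E} {L : E}
    (h : Tendsto (fun N : ℕ => (N : ℝ)⁻¹ • ∑ n ∈ range N, a n) atTop (𝓝 L)) :
    Tendsto (fun N : ℕ => (N : ℝ)⁻¹ • ∑ n ∈ range N, a (n + 1)) atTop (𝓝 L) := by
  have hsucc : Tendsto (fun N : ℕ => ((N : ℝ) + 1)⁻¹ • ∑ n ∈ range (N + 1), a n) atTop (𝓝 L) := by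
    convert h.comp (tendsto_add_atTop_nat 1) using 2 with N
    simp
  have hlim : Tendsto (fun N : ℕ => (1 + (N : ℝ)⁻¹) • (((N : ℝ) + 1)⁻¹ • ∑ n ∈ range (N + 1), a n)
      - (N : ℝ)⁻¹ • a 0) atTop (𝓝 L) := by
    simpa using ((tendsto_const_nhds (x := (1 : ℝ)).add tendsto_inv_atTop_nhds_zero_nat).smul
      hsucc).sub ((tendsto_inv_atTop_nhds_zero_nat (𝕜 := ℝ)).smul_const (a 0))
  refine hlim.congr' ((eventually_ge_atTop 1).mono fun N hN => ?_)
  have hN : (N : ℝ) ≠ 0 := by positivity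
  have hcoeff : (1 + (N : ℝ)⁻¹) * ((N : ℝ) + 1)⁻¹ = (N : ℝ)⁻¹ := by
    field_simp
  rw [smul_smul, hcoeff, sum_range_succ', smul_add, add_sub_cancel_right]

namespace Module.End

section Binomial

variable {R E : Type*} [CommRing R] [AddCommGroup E] [Module R E]

theorem pow_apply_eq_sum_of_pow_sub_smul_apply_eq_zero (f : End R E) (μ : R) {k : ℕ} {x : E}
    (hx : ((f - μ • 1) ^ k) x = 0) (n : ℕ) :
    (f ^ n) x = ∑ m ∈ range k, ((n.choose m : R) * μ ^ (n - m)) • ((f - μ • 1) ^ m) x := by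
  set g := f - μ • 1
  have hcomm : Commute g (μ • 1) := (Commute.one_right g).smul_right μ
  have hterm : ∀ m, (((g ^ m) * (μ • (1 : End R E)) ^ (n - m) * (n.choose m : End R E)) x) =
      ((n.choose m : R) * μ ^ (n - m)) • (g ^ m) x := by
    intro m
    simp only [mul_apply, natCast_apply, smul_pow, one_pow, LinearMap.smul_apply, one_apply,
      map_smul, ← Nat.cast_smul_eq_nsmul R, smul_smul, mul_comm]
  have hvanish : ∀ m, (k ≤ m ∨ n < m) → ((n.choose m : R) * μ ^ (n - m)) • (g ^ m) x = 0 := by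
    rintro m (hkm | hnm)
    · rw [← Nat.sub_add_cancel hkm, pow_add, mul_apply, hx, map_zero, smul_zero]
    · rw [Nat.choose_eq_zero_of_lt hnm, Nat.cast_zero, zero_mul, zero_smul]
  calc (f ^ n) x = ((g + μ • 1) ^ n) x := by rw [sub_add_cancel]
    _ = ∑ m ∈ range (n + 1), ((n.choose m : R) * μ ^ (n - m)) • (g ^ m) x := by
      rw [hcomm.add_pow, LinearMap.coe_sum, Finset.sum_apply]
      exact sum_congr rfl fun m _ => hterm m
    _ = ∑ m ∈ range (n + 1 + k), ((n.choose m : R) * μ ^ (n - m)) • (g ^ m) x :=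
      sum_subset (range_subset_range.2 (by omega)) fun m _ hm =>
        hvanish m (Or.inr (by simpa using hm))
    _ = ∑ m ∈ range k, ((n.choose m : R) * μ ^ (n - m)) • (g ^ m) x :=
      (sum_subset (range_subset_range.2 (by omega)) fun m _ hm =>
        hvanish m (Or.inl (by simpa using hm))).symm

theorem pow_apply_eq_pow_smul_of_apply_eq_smul {f : End R E} {μ : R} {x : E} (hx : f x = μ • x)
    (n : ℕ) : (f ^ n) x = μ ^ n • x := by
  simpa using pow_apply_eq_sum_of_pow_sub_smul_apply_eq_zero f μ (k := 1) (by simp [hx]) n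

end Binomial

section Growth

variable {𝕜 E : Type*} [NormedField 𝕜] [NormedAddCommGroup E] [NormedSpace 𝕜 E]

def growthAtMost (f : End 𝕜 E) (r : ℝ) : Submodule 𝕜 E where
  carrier := {x | (fun n => (f ^ n) x) =O[atTop] (r ^ ·)}
  zero_mem' := by simpa using isBigO_zero _ _
  add_mem' hx hy := by simpa using hx.add hy
  smul_mem' c x hx := by
    show (fun n => (f ^ n) (c • x)) =O[atTop] _
    simp_rw [map_smul]
    exact hx.const_smul_left c

theorem mem_growthAtMost {f : End 𝕜 E} {r : ℝ} {x : E} :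
    x ∈ growthAtMost f r ↔ (fun n => (f ^ n) x) =O[atTop] (r ^ ·) := Iff.rfl

theorem mem_growthAtMost_of_norm_le {f : End 𝕜 E} {μ : 𝕜} {r : ℝ} (hμ : ‖μ‖ ≤ r) {x : E}
    (hx : f x = μ • x) : x ∈ growthAtMost f r := by
  refine IsBigO.of_bound ‖x‖ (Eventually.of_forall fun n => ?_)
  rw [pow_apply_eq_pow_smul_of_apply_eq_smul hx, norm_smul, norm_pow, mul_comm, Real.norm_eq_abs,
    abs_pow]
  gcongr
  exact hμ.trans (le_abs_self r)

theorem mem_growthAtMost_of_norm_lt {f : End 𝕜 E} {μ : 𝕜} {r : ℝ} (hμ : ‖μ‖ < r) {k : ℕ} {x : E}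
    (hx : ((f - μ • 1) ^ k) x = 0) : x ∈ growthAtMost f r := by
  obtain ⟨s, hμs, hsr⟩ := exists_between hμ
  have hs : 0 < s := (norm_nonneg μ).trans_lt hμs
  have hcoeff : ∀ m, (fun n : ℕ => (n.choose m : 𝕜) * μ ^ (n - m)) =O[atTop] (r ^ ·) := by
    intro m
    -- `choose n m ≤ n ^ m`, and `n ^ m * s ^ n = o(r ^ n)` because `s < r`
    refine IsBigO.trans ?_ (isLittleO_pow_const_mul_const_pow_const_pow_of_norm_lt m
      (by rwa [Real.norm_of_nonneg hs.le])).isBigO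
    refine IsBigO.of_bound (s ^ m)⁻¹ (Eventually.of_forall fun n => ?_)
    rcases lt_or_ge n m with hnm | hmn
    · simp only [Nat.choose_eq_zero_of_lt hnm, Nat.cast_zero, zero_mul, norm_zero]
      positivity
    · rw [norm_mul, norm_pow, Real.norm_of_nonneg (by positivity)]
      calc ‖(n.choose m : 𝕜)‖ * ‖μ‖ ^ (n - m) ≤ (n : ℝ) ^ m * s ^ (n - m) := by
            gcongr
            exact (Nat.norm_cast_le _).trans (by simpa using mod_cast Nat.choose_le_pow n m)
        _ = (s ^ m)⁻¹ * ((n : ℝ) ^ m * s ^ n) := by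
            rw [pow_sub₀ _ hs.ne' hmn]; ring
  rw [mem_growthAtMost]
  simp_rw [pow_apply_eq_sum_of_pow_sub_smul_apply_eq_zero f μ hx]
  refine IsBigO.fun_sum fun m _ => ?_
  simpa using (hcoeff m).smul
    (isBigO_const_const (((f - μ • 1) ^ m) x) (one_ne_zero (α := ℝ)) atTop)

theorem growthAtMost_eq_top [IsAlgClosed 𝕜] [FiniteDimensional 𝕜 E] {f : End 𝕜 E} {r : ℝ}
    (hle : ∀ μ, f.HasEigenvalue μ → ‖μ‖ ≤ r)
    (hss : ∀ μ : 𝕜, ‖μ‖ = r → LinearMap.ker ((f - μ • 1) ^ 2) ≤ LinearMap.ker (f - μ • 1)) :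
    growthAtMost f r = ⊤ := by
  rw [eq_top_iff, ← iSup_maxGenEigenspace_eq_top f]
  refine iSup_le fun μ x hx => ?_
  obtain ⟨k, hk⟩ := (mem_maxGenEigenspace f μ x).1 hx
  by_cases hx0 : x = 0
  · exact hx0 ▸ zero_mem _
  have hμ : f.HasEigenvalue μ := hasEigenvalue_of_hasGenEigenvalue (k := k) <|
    (Submodule.ne_bot_iff _).2 ⟨x, mem_genEigenspace_nat.2 hk, hx0⟩
  rcases (hle μ hμ).lt_or_eq with hlt | heq
  · exact mem_growthAtMost_of_norm_lt hlt hk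
  · have hstab : LinearMap.ker ((f - μ • 1) ^ 1) = LinearMap.ker ((f - μ • 1) ^ (1 + 1)) :=
      le_antisymm (LinearMap.ker_le_ker_comp _ _) (by simpa using hss μ heq)
    refine mem_growthAtMost_of_norm_le heq.le ?_
    have hx' : x ∈ LinearMap.ker ((f - μ • 1) ^ (1 + k)) := by
      rw [pow_add, pow_one, LinearMap.mem_ker, mul_apply, hk, map_zero]
    simpa [sub_eq_zero, ← ker_pow_constant hstab k] using hx'

end Growth

end Module.End

section PathCount

variable {V : Type*} [Fintype V] [DecidableEq V] {M : Matrix V V ℕ}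

theorem map_natCast_pow (R : Type*) [Semiring R] (n : ℕ) :
    (M ^ n).map (Nat.cast : ℕ → R) = M.map Nat.cast ^ n :=
  Matrix.map_pow M (Nat.castRingHom R) n

theorem natCast_pathCount (R : Type*) [Semiring R] (v : V) (n : ℕ) :
    (pathCount M v n : R) = (M.map (Nat.cast : ℕ → R) ^ n *ᵥ fun _ => 1) v := by
  simp [pathCount, ← map_natCast_pow, mulVec, dotProduct]

namespace AlmostSemisimple

variable {v0 : V} {lam : ℝ}

theorem norm_le_of_hasEigenvalue (hAS : AlmostSemisimple M v0 lam) {μ : ℂ}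
    (hμ : Module.End.HasEigenvalue (toLin' (M.map (Nat.cast : ℕ → ℂ))) μ) : ‖μ‖ ≤ lam :=
  hAS.eigen_le μ <| by
    rwa [Module.End.hasEigenvalue_iff_isRoot_charpoly, Matrix.charpoly_toLin'] at hμ

theorem ker_sq_le_ker (hAS : AlmostSemisimple M v0 lam) {μ : ℂ} (hμ : ‖μ‖ = lam) :
    LinearMap.ker ((toLin' (M.map (Nat.cast : ℕ → ℂ)) - μ • 1) ^ 2) ≤
      LinearMap.ker (toLin' (M.map (Nat.cast : ℕ → ℂ)) - μ • 1) := by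
  have hsub : toLin' (M.map (Nat.cast : ℕ → ℂ)) - μ • 1 = toLin' (M.map Nat.cast - μ • 1) := by
    rw [map_sub, map_smul, toLin'_one, Module.End.one_eq_id]
  intro x hx
  rw [hsub, sq, LinearMap.mem_ker, Module.End.mul_apply, toLin'_apply, toLin'_apply] at hx
  rw [hsub, LinearMap.mem_ker, toLin'_apply]
  exact hAS.semisimple_top μ hμ x hx

theorem pathCount_isBigO (hAS : AlmostSemisimple M v0 lam) (v : V) :
    (fun n => (pathCount M v n : ℝ)) =O[atTop] (lam ^ ·) := by
  set f := toLin' (M.map (Nat.cast : ℕ → ℂ))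
  have hall : Module.End.growthAtMost f lam = ⊤ :=
    Module.End.growthAtMost_eq_top (fun _ => hAS.norm_le_of_hasEigenvalue)
      (fun _ => hAS.ker_sq_le_ker)
  have hone : (fun _ => (1 : ℂ)) ∈ Module.End.growthAtMost f lam := hall ▸ Submodule.mem_top
  refine IsBigO.trans (isBigO_of_le _ fun n => ?_) hone
  calc ‖(pathCount M v n : ℝ)‖ = ‖(pathCount M v n : ℂ)‖ := by simp
    _ = ‖(f ^ n) (fun _ => 1) v‖ := by
      rw [natCast_pathCount, ← toLin'_pow, toLin'_apply]
    _ ≤ ‖(f ^ n) (fun _ => 1)‖ := norm_le_pi_norm _ v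

end AlmostSemisimple

namespace IsRho1

variable {lam : ℝ} {ρ1 : V → ℝ}

theorem nonneg (hρ : IsRho1 M lam ρ1) (hlam : 0 ≤ lam) (v : V) : 0 ≤ ρ1 v :=
  ge_of_tendsto' (hρ v) fun N => by positivity

theorem mulVec_eq (hρ : IsRho1 M lam ρ1) (hlam : lam ≠ 0) :
    M.map (Nat.cast : ℕ → ℝ) *ᵥ ρ1 = lam • ρ1 := by
  set B := M.map (Nat.cast : ℕ → ℝ)
  let a : ℕ → V → ℝ := fun n => (lam ^ n)⁻¹ • (B ^ n *ᵥ fun _ => 1)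
  have hshift : ∀ n, toLin' B (a n) = lam • a (n + 1) := fun n => by
    rw [toLin'_apply, mulVec_smul, mulVec_mulVec, ← pow_succ', smul_smul]
    congr 1
    field_simp
    ring
  have hcesaro : Tendsto (fun N : ℕ => (N : ℝ)⁻¹ • ∑ n ∈ range N, a n) atTop (𝓝 ρ1) := by
    refine tendsto_pi_nhds.2 fun u => (hρ u).congr fun N => ?_
    simp [a, natCast_pathCount, div_eq_inv_mul, B]
  have hleft := ((toLin' B).continuous_of_finiteDimensional.tendsto ρ1).comp hcesaro
  have hright := (tendsto_cesaro_shift hcesaro).const_smul lam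
  refine tendsto_nhds_unique (hleft.congr fun N => ?_) hright
  simp only [Function.comp_apply, map_smul, map_sum, hshift, ← smul_sum, smul_comm lam]

theorem pow_mul_le_pathCount_mul_sum (hρ : IsRho1 M lam ρ1) (hlam : 0 < lam) (v : V) (n : ℕ) :
    lam ^ n * ρ1 v ≤ pathCount M v n * ∑ u, ρ1 u := by
  have hpow : (M ^ n).map (Nat.cast : ℕ → ℝ) *ᵥ ρ1 = lam ^ n • ρ1 := by
    rw [map_natCast_pow, ← toLin'_apply, toLin'_pow]
    exact Module.End.pow_apply_eq_pow_smul_of_apply_eq_smul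
      (by rw [toLin'_apply]; exact hρ.mulVec_eq hlam.ne') n
  calc lam ^ n * ρ1 v = ∑ u, ((M ^ n) v u : ℝ) * ρ1 u := by
        rw [← smul_eq_mul, ← Pi.smul_apply, ← hpow]; rfl
    _ ≤ ∑ u, ((M ^ n) v u : ℝ) * ∑ u, ρ1 u := by
        gcongr with u
        exact single_le_sum (fun u _ => hρ.nonneg hlam.le u) (mem_univ u)
    _ = pathCount M v n * ∑ u, ρ1 u := by
        simp [← sum_mul, pathCount, mulVec, dotProduct]

end IsRho1

end PathCount

/-- in an almost semisimple graph of growth `lam > 1`, for any vertex `v`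
of large growth (`ρ(𝟙)_v > 0`) there is `c > 0` with
`c⁻¹·lamⁿ ≤ #{paths of length n from v} ≤ c·lamⁿ` for all `n`. -/
theorem pathCount_large_growth {V : Type*} [Fintype V] [DecidableEq V]
    (M : Matrix V V ℕ) (v0 : V) (lam : ℝ) (hAS : AlmostSemisimple M v0 lam)
    (ρ1 : V → ℝ) (hρ : IsRho1 M lam ρ1)
    (v : V) (hv : 0 < ρ1 v) :
    ∃ c > (0 : ℝ), ∀ n : ℕ,
      c⁻¹ * lam ^ n ≤ (pathCount M v n : ℝ) ∧
      (pathCount M v n : ℝ) ≤ c * lam ^ n := by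
  have hlam : 0 < lam := one_pos.trans hAS.growth_gt_one
  obtain ⟨C, hC⟩ := (isBigO_nat_atTop_iff fun n h => absurd h (by positivity)).1
    (hAS.pathCount_isBigO v)
  set R := ∑ u, ρ1 u
  have hR : 0 < R := hv.trans_le (single_le_sum (fun u _ => hρ.nonneg hlam.le u) (mem_univ v))
  refine ⟨max C (R / ρ1 v), by positivity, fun n => ⟨?_, ?_⟩⟩
  · calc (max C (R / ρ1 v))⁻¹ * lam ^ n ≤ (R / ρ1 v)⁻¹ * lam ^ n := by
          gcongr
          exact le_max_right _ _
      _ ≤ pathCount M v n := by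
          rw [inv_div, div_mul_eq_mul_div, div_le_iff₀ hR, mul_comm]
          exact hρ.pow_mul_le_pathCount_mul_sum hlam v n
  · calc (pathCount M v n : ℝ) ≤ C * lam ^ n := by simpa [abs_of_pos hlam] using hC n
      _ ≤ max C (R / ρ1 v) * lam ^ n := by gcongr; exact le_max_left _ _
end

section
/- Let G be a δ-hyperbolic group with a fixed generating set, and let g ∈ G lie on an infinite geodesic ray from the identity. Then there exists a constant c depending only on δ such that for any R ≥ 0 and any n ≥ 0, the shadow S_1(g, R + c) ⊂ G contains a ball of radius n in the Cayley graph; consequently #(S_1(g, R+c) ∩ S_{n'}) grows at rate λ^{n'}, i.e., the shadow has maximal growth. -/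
/-!
Take `c = δ`. Since `(γ D, γ M)_1 = D` for `D ≤ M`, the four-point condition at `1` puts every
`z` with `(γ M, z)_1 ≥ D` into the shadow `S_1(γ D, R + δ)`; a ball of radius `n` centred far
enough along the ray consists of such points.

For the growth, translate the sphere of radius `m + t` by `γ (2D + t)`. The elements that are
shortened below length `m` inject into the ball of radius `m`, which for large `t` holds at most
half of the lower bound `c₀⁻¹ λ^(m+t)` for the sphere; the rest lands in the shadow, with lengths in
a window `[m, m + 2D + 2t]` of fixed width. So some sphere in that window meets the shadow in `≳ λ^m` points, and together with
`#S_n ≤ c₀ λⁿ` this pins the limsup of the `n`-th roots at `λ`.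
-/

open Filter

noncomputable def wordLength {G : Type*} [Group G] (S : Set G) (g : G) : ℕ :=
  sInf {n | ∃ l : List G, l.length = n ∧ (∀ x ∈ l, x ∈ S) ∧ l.prod = g}

/-- The Gromov product `(y,z)_x` in the word metric `d(g,h) = |g⁻¹h|_S`. -/
noncomputable def gp3 {G : Type*} [Group G] (S : Set G) (x y z : G) : ℝ :=
  ((wordLength S (x⁻¹ * y) : ℝ) + (wordLength S (x⁻¹ * z) : ℝ)
    - (wordLength S (y⁻¹ * z) : ℝ)) / 2

/-- The shadow `S_1(g,R) = {h ∈ G : (g,h)_1 ≥ d_G(1,g) − R}` based at the identity. -/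
noncomputable def groupShadow {G : Type*} [Group G] (S : Set G) (g : G) (R : ℝ) :
    Set G :=
  {z | (wordLength S g : ℝ) - R ≤ gp3 S 1 g z}

section Growth

theorem tendsto_mul_pow_rpow_inv {C lam : ℝ} (hC : 0 < C) (hlam : 0 < lam) :
    Tendsto (fun n : ℕ => (C * lam ^ n) ^ (n : ℝ)⁻¹) atTop (nhds lam) := by
  have hC' : Tendsto (fun n : ℕ => C ^ (n : ℝ)⁻¹) atTop (nhds 1) := by
    simpa [Function.comp_def] using ((Real.continuousAt_const_rpow hC.ne').tendsto.comp
      tendsto_inv_atTop_nhds_zero_nat)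
  refine (one_mul lam ▸ hC'.mul_const lam).congr' ?_
  filter_upwards [eventually_ne_atTop 0] with n hn
  rw [Real.mul_rpow hC.le (by positivity), ← Real.rpow_natCast, ← Real.rpow_mul hlam.le,
    mul_inv_cancel₀ (by exact_mod_cast hn), Real.rpow_one]

theorem limsup_rpow_inv_eq {a : ℕ → ℝ} {lam C₁ C₂ : ℝ} (ha : ∀ n, 0 ≤ a n) (hlam : 0 < lam)
    (hup : ∀ n, a n ≤ C₂ * lam ^ n) (hlow : ∃ᶠ n in atTop, C₁ * lam ^ n ≤ a n) (hC₁ : 0 < C₁) :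
    limsup (fun n : ℕ => a n ^ (n : ℝ)⁻¹) atTop = lam := by
  have hC₂ : 0 < C₂ := by
    obtain ⟨n, hn⟩ := hlow.exists
    exact pos_of_mul_pos_left ((by positivity : 0 < C₁ * lam ^ n).trans_le (hn.trans (hup n)))
      (by positivity)
  have hupper : ∀ n : ℕ, a n ^ (n : ℝ)⁻¹ ≤ (C₂ * lam ^ n) ^ (n : ℝ)⁻¹ := fun n =>
    Real.rpow_le_rpow (ha n) (hup n) (by positivity)
  have hbdd : IsBoundedUnder (· ≤ ·) atTop (fun n : ℕ => a n ^ (n : ℝ)⁻¹) :=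
    (tendsto_mul_pow_rpow_inv hC₂ hlam).isBoundedUnder_le.mono_le (Eventually.of_forall hupper)
  apply le_antisymm
  · refine le_of_forall_pos_le_add fun ε hε => limsup_le_of_le
      (isCoboundedUnder_le_of_le atTop fun n => Real.rpow_nonneg (ha n) _) ?_
    filter_upwards [(tendsto_mul_pow_rpow_inv hC₂ hlam).eventually
      (eventually_le_nhds (by linarith : lam < lam + ε))] with n hn
    exact (hupper n).trans hn
  · refine le_of_forall_sub_le fun ε hε => le_limsup_of_frequently_le ?_ hbdd
    refine (hlow.and_eventually ((tendsto_mul_pow_rpow_inv hC₁ hlam).eventually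
      (eventually_ge_nhds (by linarith : lam - ε < lam)))).mono fun n ⟨hn, hε⟩ => ?_
    exact hε.trans (Real.rpow_le_rpow (by positivity) hn (by positivity))

theorem frequently_le_of_sum_Ico_ge {a : ℕ → ℝ} {C lam : ℝ} {W : ℕ} (hC : 0 ≤ C)
    (hlam : 1 ≤ lam) (hW : 0 < W) (h : ∀ m, C * lam ^ m ≤ ∑ n ∈ Finset.Ico m (m + W), a n) :
    ∃ᶠ n in atTop, C / (W * lam ^ W) * lam ^ n ≤ a n := by
  rw [frequently_atTop]
  intro m
  have hsum : ∑ _n ∈ Finset.Ico m (m + W), C * lam ^ m / W = C * lam ^ m := by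
    rw [Finset.sum_const, Nat.card_Ico, Nat.add_sub_cancel_left, nsmul_eq_mul]
    field_simp
  obtain ⟨n, hn, hle⟩ := Finset.exists_le_of_sum_le (Finset.nonempty_Ico.2 (by omega))
    (hsum.trans_le (h m))
  rw [Finset.mem_Ico] at hn
  refine ⟨n, hn.1, le_trans ?_ hle⟩
  have hpow : lam ^ n ≤ lam ^ m * lam ^ W := by
    rw [← pow_add]; exact pow_le_pow_right₀ hlam hn.2.le
  calc C / (W * lam ^ W) * lam ^ n ≤ C / (W * lam ^ W) * (lam ^ m * lam ^ W) := by gcongr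
    _ = C * lam ^ m / W := by field_simp

end Growth

section Counting

theorem ncard_le_sum_ncard_fiber {α : Type*} (ℓ : α → ℕ) {A : Set α} {s : Finset ℕ} (hA : ∀ x ∈ A, ℓ x ∈ s) :
    A.ncard ≤ ∑ n ∈ s, {x ∈ A | ℓ x = n}.ncard := by
  classical
  rcases A.finite_or_infinite with hfin | hinf
  · rw [Set.ncard_eq_toFinset_card A hfin,
      Finset.card_eq_sum_card_fiberwise (f := ℓ) (t := s) fun x hx => hA x (by simpa using hx)]
    refine (Finset.sum_congr rfl fun n _ => ?_).le
    rw [← Set.ncard_coe_finset]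
    congr 1
    ext x
    simp
  · simp [hinf.ncard]

theorem ncard_ball_le_of_ncard_sphere_le {α : Type*} (ℓ : α → ℕ) {c lam : ℝ} (hlam : 1 < lam) (hfin : ∀ n, {x | ℓ x = n}.Finite)
    (hc : ∀ n, ({x | ℓ x = n}.ncard : ℝ) ≤ c * lam ^ n) (k : ℕ) :
    ({x | ℓ x < k}.ncard : ℝ) ≤ c * lam ^ k / (lam - 1) := by
  have hc0 : 0 ≤ c := by simpa using (Nat.cast_nonneg _).trans (hc 0)
  have hfiber : {x | ℓ x < k}.ncard ≤ ∑ n ∈ Finset.range k, {x | ℓ x = n}.ncard :=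
    (ncard_le_sum_ncard_fiber ℓ (s := Finset.range k) (by simp)).trans
      (Finset.sum_le_sum fun n _ => Set.ncard_le_ncard (fun x hx => hx.2) (hfin n))
  calc ({x | ℓ x < k}.ncard : ℝ) ≤ ∑ n ∈ Finset.range k, ({x | ℓ x = n}.ncard : ℝ) := by
        exact_mod_cast hfiber
    _ ≤ ∑ n ∈ Finset.range k, c * lam ^ n := Finset.sum_le_sum fun n _ => hc n
    _ = c * (lam ^ k - 1) / (lam - 1) := by rw [← Finset.mul_sum, geom_sum_eq hlam.ne']; ring
    _ ≤ c * lam ^ k / (lam - 1) := by gcongr; linarith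

theorem ncard_sphere_translate_ge {G : Type*} [Group G] (ℓ : G → ℕ) {c lam : ℝ} {t : ℕ}
    (hc : 0 < c) (hlam : 1 < lam) (hfin : ∀ n, {x | ℓ x = n}.Finite)
    (hlow : ∀ n, c⁻¹ * lam ^ n ≤ ({x | ℓ x = n}.ncard : ℝ))
    (hup : ∀ n, ({x | ℓ x = n}.ncard : ℝ) ≤ c * lam ^ n)
    (ht : 2 * c ^ 2 ≤ (lam - 1) * lam ^ t) (g : G) (m : ℕ) :
    lam ^ (m + t) / (2 * c) ≤ ({v | ℓ v = m + t ∧ m ≤ ℓ (g * v)}.ncard : ℝ) := by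
  have hsplit : {v | ℓ v = m + t} =
      {v | ℓ v = m + t ∧ m ≤ ℓ (g * v)} ∪ {v | ℓ v = m + t ∧ ℓ (g * v) < m} := by
    ext v; simp only [Set.mem_ofPred_eq, Set.mem_union]; omega
  have hshort : ({v | ℓ v = m + t ∧ ℓ (g * v) < m}.ncard : ℝ) ≤ c * lam ^ m / (lam - 1) := by
    have hball : {z | ℓ z < m}.Finite :=
      (Set.finite_Iio m).preimage' fun n _ => hfin n
    have hinj := Set.ncard_le_ncard_of_injOn (g * ·) (s := {v | ℓ v = m + t ∧ ℓ (g * v) < m})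
      (t := {z | ℓ z < m}) (fun v hv => hv.2) (mul_right_injective g).injOn hball
    exact (Nat.cast_le.2 hinj).trans (ncard_ball_le_of_ncard_sphere_le ℓ hlam hfin hup m)
  have hsmall : c * lam ^ m / (lam - 1) ≤ lam ^ (m + t) / (2 * c) := by
    rw [div_le_div_iff₀ (by linarith) (by positivity), pow_add]
    nlinarith [pow_pos (by linarith : 0 < lam) m]
  have hsphere := (hlow (m + t)).trans (Nat.cast_le.2 (hsplit ▸ Set.ncard_union_le _ _))
  have hhalf : c⁻¹ * lam ^ (m + t) = 2 * (lam ^ (m + t) / (2 * c)) := by field_simp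
  push_cast at hsphere
  linarith

end Counting

section WordLength

variable {G : Type*} [Group G] {S : Set G}

theorem wordLength_prod_le {l : List G} (hl : ∀ x ∈ l, x ∈ S) :
    wordLength S l.prod ≤ l.length :=
  Nat.sInf_le ⟨l, rfl, hl, rfl⟩

theorem wordLength_one : wordLength S (1 : G) = 0 :=
  Nat.le_zero.mp (wordLength_prod_le (l := []) (by simp))

variable (hS : ∀ g : G, ∃ l : List G, (∀ x ∈ l, x ∈ S) ∧ l.prod = g)
include hS

theorem exists_list_length_eq_wordLength (g : G) :
    ∃ l : List G, l.length = wordLength S g ∧ (∀ x ∈ l, x ∈ S) ∧ l.prod = g := by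
  obtain ⟨l, hl, hg⟩ := hS g
  exact Nat.sInf_mem (s := {n | ∃ l : List G, l.length = n ∧ (∀ x ∈ l, x ∈ S) ∧ l.prod = g})
    ⟨_, l, rfl, hl, hg⟩

theorem wordLength_mul_le (a b : G) :
    wordLength S (a * b) ≤ wordLength S a + wordLength S b := by
  obtain ⟨la, hla, hlaS, rfl⟩ := exists_list_length_eq_wordLength hS a
  obtain ⟨lb, hlb, hlbS, rfl⟩ := exists_list_length_eq_wordLength hS b
  rw [← hla, ← hlb, ← List.length_append, ← List.prod_append]
  exact wordLength_prod_le fun x hx => (List.mem_append.1 hx).elim (hlaS x) (hlbS x)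

theorem wordLength_inv_le {C : ℕ} (hC : ∀ s ∈ S, wordLength S s⁻¹ ≤ C) (g : G) :
    wordLength S g⁻¹ ≤ C * wordLength S g := by
  obtain ⟨l, hl, hlS, rfl⟩ := exists_list_length_eq_wordLength hS g
  rw [← hl]
  clear hl
  induction l with
  | nil => simp [wordLength_one]
  | cons x l ih =>
    rw [List.forall_mem_cons] at hlS
    rw [List.prod_cons, mul_inv_rev, List.length_cons, mul_add_one]
    exact (wordLength_mul_le hS _ _).trans (add_le_add (ih hlS.2) (hC x hlS.1))

end WordLength

section Shadow

variable {G : Type*} [Group G] {S : Set G} {γ : ℕ → G}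
  (hγ : ∀ m n : ℕ, (wordLength S ((γ m)⁻¹ * γ n) : ℤ) = |(m : ℤ) - n|)
include hγ

theorem wordLength_inv_mul_of_geodesic {m n : ℕ} (hmn : m ≤ n) :
    wordLength S ((γ m)⁻¹ * γ n) = n - m := by
  have h := hγ m n
  rw [abs_sub_comm, abs_of_nonneg (by omega)] at h
  omega

variable (hγ0 : γ 0 = 1)
include hγ0

theorem wordLength_of_geodesic (n : ℕ) : wordLength S (γ n) = n := by
  simpa [hγ0] using wordLength_inv_mul_of_geodesic hγ (Nat.zero_le n)

theorem gp3_one_of_geodesic {m n : ℕ} (hmn : m ≤ n) : gp3 S 1 (γ m) (γ n) = m := by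
  simp only [gp3, inv_one, one_mul, wordLength_of_geodesic hγ hγ0,
    wordLength_inv_mul_of_geodesic hγ hmn, Nat.cast_sub hmn]
  ring

variable {δ R : ℝ} (hhyp : ∀ a b c : G, min (gp3 S 1 a b) (gp3 S 1 b c) - δ ≤ gp3 S 1 a c)
  (hR : 0 ≤ R)
include hhyp hR

theorem mem_groupShadow_of_le_gp3 {D M : ℕ} (hDM : D ≤ M) {z : G}
    (hz : (D : ℝ) ≤ gp3 S 1 (γ M) z) : z ∈ groupShadow S (γ D) (R + δ) := by
  have h := hhyp (γ D) (γ M) z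
  rw [gp3_one_of_geodesic hγ hγ0 hDM, min_eq_left hz] at h
  show (wordLength S (γ D) : ℝ) - (R + δ) ≤ gp3 S 1 (γ D) z
  rw [wordLength_of_geodesic hγ hγ0]
  linarith

theorem mem_groupShadow_of_wordLength {D M : ℕ} (hDM : D ≤ M) {z : G}
    (hz : 2 * D + wordLength S ((γ M)⁻¹ * z) ≤ M + wordLength S z) :
    z ∈ groupShadow S (γ D) (R + δ) := by
  refine mem_groupShadow_of_le_gp3 hγ hγ0 hhyp hR hDM ?_
  simp only [gp3, inv_one, one_mul, wordLength_of_geodesic hγ hγ0]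
  have : 2 * (D : ℝ) + wordLength S ((γ M)⁻¹ * z) ≤ M + wordLength S z := by
    exact_mod_cast hz
  linarith

-- `S` need not be symmetric, so only `|w⁻¹| ≤ C |w|`: the centre lies `(C + 1) n` steps past `γ D`.
theorem ball_subset_groupShadow (hS : ∀ g : G, ∃ l : List G, (∀ x ∈ l, x ∈ S) ∧ l.prod = g)
    {C : ℕ} (hC : ∀ s ∈ S, wordLength S s⁻¹ ≤ C) (D n : ℕ) :
    {z | (wordLength S ((γ (D + (C + 1) * n))⁻¹ * z) : ℝ) ≤ n} ⊆
      groupShadow S (γ D) (R + δ) := by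
  intro z hz
  set w := (γ (D + (C + 1) * n))⁻¹ * z
  have hw : wordLength S w ≤ n := by exact_mod_cast hz
  have hwinv : wordLength S w⁻¹ ≤ C * n :=
    (wordLength_inv_le hS hC w).trans (Nat.mul_le_mul_left C hw)
  have hz_long : D + (C + 1) * n ≤ wordLength S z + wordLength S w⁻¹ := by
    have h := wordLength_mul_le hS z w⁻¹
    rwa [show z * w⁻¹ = γ (D + (C + 1) * n) by simp [w], wordLength_of_geodesic hγ hγ0] at h
  refine mem_groupShadow_of_wordLength hγ hγ0 hhyp hR (Nat.le_add_right D ((C + 1) * n)) ?_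
  change 2 * D + wordLength S w ≤ _
  have := add_one_mul C n
  omega

theorem sum_ncard_groupShadow_sphere_ge
    (hS : ∀ g : G, ∃ l : List G, (∀ x ∈ l, x ∈ S) ∧ l.prod = g) {c lam : ℝ} {t : ℕ}
    (hc : 0 < c) (hlam : 1 < lam) (hfin : ∀ n, {x | wordLength S x = n}.Finite)
    (hlow : ∀ n, c⁻¹ * lam ^ n ≤ ({x | wordLength S x = n}.ncard : ℝ))
    (hup : ∀ n, ({x | wordLength S x = n}.ncard : ℝ) ≤ c * lam ^ n)
    (ht : 2 * c ^ 2 ≤ (lam - 1) * lam ^ t) (D m : ℕ) :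
    lam ^ t / (2 * c) * lam ^ m ≤ ∑ n ∈ Finset.Ico m (m + (2 * D + 2 * t + 1)),
      ({z | z ∈ groupShadow S (γ D) (R + δ) ∧ wordLength S z = n}.ncard : ℝ) := by
  set M := 2 * D + t
  set good := {v | wordLength S v = m + t ∧ m ≤ wordLength S (γ M * v)}
  have hwindow : ∀ z ∈ (γ M * ·) '' good,
      wordLength S z ∈ Finset.Ico m (m + (2 * D + 2 * t + 1)) := by
    rintro _ ⟨v, ⟨hv, hmv⟩, rfl⟩
    dsimp only
    have h := wordLength_mul_le hS (γ M) v
    rw [wordLength_of_geodesic hγ hγ0] at h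
    rw [Finset.mem_Ico]
    omega
  have hfiber : ∀ n, {z ∈ (γ M * ·) '' good | wordLength S z = n} ⊆
      {z | z ∈ groupShadow S (γ D) (R + δ) ∧ wordLength S z = n} := by
    rintro n _ ⟨⟨v, ⟨hv, hmv⟩, rfl⟩, hn⟩
    dsimp only at hn ⊢
    refine ⟨mem_groupShadow_of_wordLength hγ hγ0 hhyp hR (by omega : D ≤ M) ?_, hn⟩
    rw [inv_mul_cancel_left, hv]
    omega
  calc lam ^ t / (2 * c) * lam ^ m = lam ^ (m + t) / (2 * c) := by rw [pow_add]; ring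
    _ ≤ (good.ncard : ℝ) :=
        ncard_sphere_translate_ge (wordLength S) hc hlam hfin hlow hup ht (γ M) m
    _ = (((γ M * ·) '' good).ncard : ℝ) := by
        rw [Set.ncard_image_of_injective _ (mul_right_injective _)]
    _ ≤ ∑ n ∈ Finset.Ico m (m + (2 * D + 2 * t + 1)),
          ({z ∈ (γ M * ·) '' good | wordLength S z = n}.ncard : ℝ) := by
        exact_mod_cast ncard_le_sum_ncard_fiber _ hwindow
    _ ≤ _ := Finset.sum_le_sum fun n _ => by
        exact_mod_cast Set.ncard_le_ncard (hfiber n) ((hfin n).subset fun z hz => hz.2)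

end Shadow

/-- let `G` be a δ-hyperbolic group (with sphere sizes `#S_n ≍ λⁿ`,
`λ > 1`, by Coornaert's theorem) and let `g = γ D` lie on an infinite geodesic ray `γ`
from the identity.  Then there is a constant `c` depending only on δ such that for
every `R ≥ 0` the shadow `S_1(g, R+c)` contains balls of every radius `n`;
consequently `#(S_1(g,R+c) ∩ S_{n'})` grows at rate `λ^{n'}`, i.e. the shadow has
maximal growth `limsup #(S_1(g,R+c) ∩ S_{n'})^{1/n'} = λ`. -/
theorem shadow_maximal_growth (δ : ℝ) (hδ : 0 ≤ δ) :
    ∃ c : ℝ, 0 ≤ c ∧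
      ∀ (G : Type) [Group G] (S : Finset G),
        (∀ g : G, ∃ l : List G, (∀ x ∈ l, x ∈ (S : Set G)) ∧ l.prod = g) →
        (∀ x a b c' : G,
          min (gp3 (S : Set G) x a b) (gp3 (S : Set G) x b c') - δ ≤
            gp3 (S : Set G) x a c') →
        ∀ (lam c₀ : ℝ), 1 < lam → 1 ≤ c₀ →
        (∀ n : ℕ, c₀⁻¹ * lam ^ n ≤ (Nat.card {h : G | wordLength (S : Set G) h = n} : ℝ) ∧
          (Nat.card {h : G | wordLength (S : Set G) h = n} : ℝ) ≤ c₀ * lam ^ n) →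
        ∀ γ : ℕ → G, γ 0 = 1 →
        (∀ m n : ℕ, (wordLength (S : Set G) ((γ m)⁻¹ * γ n) : ℤ) = |(m : ℤ) - n|) →
        ∀ (D : ℕ) (R : ℝ), 0 ≤ R →
          (∀ n : ℕ, ∃ h : G,
            {z : G | (wordLength (S : Set G) (h⁻¹ * z) : ℝ) ≤ n} ⊆
              groupShadow (S : Set G) (γ D) (R + c)) ∧
          atTop.limsup (fun n : ℕ =>
            (Nat.card {z : G | z ∈ groupShadow (S : Set G) (γ D) (R + c) ∧
                wordLength (S : Set G) z = n} : ℝ) ^ ((n : ℝ)⁻¹)) = lam := by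
  refine ⟨δ, hδ, fun G _ S hS hhyp lam c₀ hlam hc₀ hcoor γ hγ0 hγ D R hR => ⟨fun n => ?_, ?_⟩⟩
  · exact ⟨_, ball_subset_groupShadow hγ hγ0 (hhyp 1) hR hS
      (fun s hs => Finset.le_sup (f := fun s => wordLength (S : Set G) s⁻¹) hs) D n⟩
  · simp only [Nat.card_coe_set_eq] at hcoor ⊢
    have hc₀pos : 0 < c₀ := by linarith
    have hfin : ∀ n, {x : G | wordLength (S : Set G) x = n}.Finite := fun n =>
      Set.finite_of_ncard_pos <| by
        exact_mod_cast (by positivity : (0 : ℝ) < c₀⁻¹ * lam ^ n).trans_le (hcoor n).1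
    obtain ⟨t, ht⟩ := pow_unbounded_of_one_lt (2 * c₀ ^ 2 / (lam - 1)) hlam
    rw [div_lt_iff₀ (by linarith)] at ht
    refine limsup_rpow_inv_eq (fun n => Nat.cast_nonneg _) (by linarith) (C₂ := c₀)
      (fun n => le_trans ?_ (hcoor n).2)
      (frequently_le_of_sum_Ico_ge (by positivity) hlam.le (Nat.succ_pos _)
        (sum_ncard_groupShadow_sphere_ge hγ hγ0 (hhyp 1) hR hS hc₀pos hlam hfin
          (fun n => (hcoor n).1) (fun n => (hcoor n).2) (by linarith) D)) (by positivity)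
    exact_mod_cast Set.ncard_le_ncard (fun z (hz : _ ∧ _) => hz.2) (hfin n)
end

section
/- With the Markov measure ℙⁿ and the uniform counting measure Pⁿ on the sphere S_n of the universal cover of an almost semisimple graph Γ, there exists c > 1 such that for every subset A of the universal cover: c⁻¹·ℙⁿ(A) ≤ Pⁿ(A ∩ LG) ≤ c·ℙⁿ(A), where LG is the set of elements whose vertex has large growth. -/
open Filter

/-- The adjacency matrix (with multiplicities) of the directed graph with edge set `E`
and endpoint maps `src`, `tgt`. -/
def adjM {V E : Type*} [Fintype E] [DecidableEq V] (src tgt : E → V) :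
    Matrix V V ℕ := fun i j => (Finset.univ.filter fun e => src e = i ∧ tgt e = j).card

/-- A directed edge path starting at `v0`, encoded as a list of edges. -/
def IsPath {V E : Type*} (src tgt : E → V) (v0 : V) (l : List E) : Prop :=
  l.Chain' (fun e f => tgt e = src f) ∧ ∀ e ∈ l.head?, src e = v0

/-- The terminal vertex of an edge path (the basepoint `v0` for the empty path). -/
def endV {V E : Type*} (tgt : E → V) (v0 : V) (l : List E) : V :=
  (l.getLast?).elim v0 tgt

/-!
Along an edge `e` one has `ρ(𝟙)_{tgt e} ≤ λ ρ(𝟙)_{src e}`, so `ρ(𝟙)` stays zero after a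
small-growth vertex and the Markov weight of a path from `v0` telescopes to
`ρ(𝟙)_{end} / (ρ(𝟙)_{v0} λⁿ)`. As `ρ(𝟙)` takes finitely many positive values, `ℙⁿ(A)` is
comparable to `#(S_n ∩ A ∩ LG) / λⁿ`, and it remains to see `#S_n ≍ λⁿ`. The upper bound is
spectral: a generalized eigenvector for an eigenvalue of modulus `< λ` grows slower than `λⁿ`, and
for the eigenvalues of modulus `λ` generalized eigenvectors are eigenvectors by semisimplicity.
The lower bound `ρ(𝟙)_{v0} λⁿ ≤ B #S_n` follows by cutting the paths of length `k ≥ n` after `n`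
steps, which bounds `#S_k / λᵏ` by `B #S_n / λⁿ`, and taking Cesàro means.
-/

namespace Module.End

variable {𝕜 E : Type*} [NormedField 𝕜] [NormedAddCommGroup E] [NormedSpace 𝕜 E]

def growthLE (f : Module.End 𝕜 E) (lam : ℝ) : Submodule 𝕜 E where
  carrier := {x | ∃ C : ℝ, ∀ n : ℕ, ‖(f ^ n) x‖ ≤ C * lam ^ n}
  add_mem' := by
    rintro x y ⟨C, hC⟩ ⟨D, hD⟩
    refine ⟨C + D, fun n => ?_⟩
    rw [map_add, add_mul]
    exact (norm_add_le _ _).trans (add_le_add (hC n) (hD n))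
  zero_mem' := ⟨0, fun n => by simp⟩
  smul_mem' := by
    rintro c x ⟨C, hC⟩
    refine ⟨‖c‖ * C, fun n => ?_⟩
    rw [map_smul, norm_smul, mul_assoc]
    exact mul_le_mul_of_nonneg_left (hC n) (norm_nonneg c)

variable {f : Module.End 𝕜 E} {lam : ℝ} {μ : 𝕜}

theorem mem_growthLE_iff {x : E} :
    x ∈ growthLE f lam ↔ ∃ C : ℝ, ∀ n : ℕ, ‖(f ^ n) x‖ ≤ C * lam ^ n := Iff.rfl

theorem eigenspace_le_growthLE (hμ : ‖μ‖ ≤ lam) : f.eigenspace μ ≤ growthLE f lam := by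
  intro x hx
  rw [mem_eigenspace_iff] at hx
  have hpow : ∀ n : ℕ, (f ^ n) x = μ ^ n • x := by
    intro n
    induction n <;> simp [*, pow_succ f, smul_smul, pow_succ' μ]
  refine ⟨‖x‖, fun n => ?_⟩
  rw [hpow, norm_smul, norm_pow, mul_comm]
  gcongr

/-- Since `fⁿ⁺¹ x = μ • fⁿ x + fⁿ ((f - μ) x)`, the bound `‖fⁿ x‖ ≤ D lamⁿ` propagates as soon
as `C ≤ (lam - ‖μ‖) D`, whence the constant `D = ‖x‖ + C / (lam - ‖μ‖)`. -/
theorem mem_growthLE_of_sub_smul_apply_mem (hμ : ‖μ‖ < lam) {x : E}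
    (hx : (f - μ • 1) x ∈ growthLE f lam) : x ∈ growthLE f lam := by
  obtain ⟨C, hC⟩ := hx
  have hC0 : 0 ≤ C := by simpa using (norm_nonneg _).trans (hC 0)
  have hgap : 0 < lam - ‖μ‖ := sub_pos.2 hμ
  set D := ‖x‖ + C / (lam - ‖μ‖)
  have hCD : C ≤ (lam - ‖μ‖) * D := by
    have hD : (lam - ‖μ‖) * D = (lam - ‖μ‖) * ‖x‖ + C := by
      simp only [D]
      field_simp
    linarith [mul_nonneg hgap.le (norm_nonneg x)]
  refine ⟨D, fun n => ?_⟩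
  induction n with
  | zero => simpa [D] using div_nonneg hC0 hgap.le
  | succ n ih =>
    have hfx : f x = μ • x + (f - μ • 1) x := by simp
    have hlam : 0 ≤ lam ^ n := pow_nonneg ((norm_nonneg μ).trans hμ.le) n
    calc ‖(f ^ (n + 1)) x‖ = ‖μ • (f ^ n) x + (f ^ n) ((f - μ • 1) x)‖ := by
          rw [pow_succ, mul_apply, hfx, map_add, map_smul]
      _ ≤ ‖μ‖ * (D * lam ^ n) + C * lam ^ n := by
          refine (norm_add_le _ _).trans (add_le_add ?_ (hC n))
          rw [norm_smul]
          gcongr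
      _ ≤ D * lam ^ (n + 1) := by
          rw [pow_succ]
          nlinarith [mul_le_mul_of_nonneg_left hCD hlam]

theorem maxGenEigenspace_le_growthLE_of_norm_lt (hμ : ‖μ‖ < lam) :
    f.maxGenEigenspace μ ≤ growthLE f lam := by
  intro x hx
  obtain ⟨k, hk⟩ := (mem_maxGenEigenspace f μ x).1 hx
  clear hx
  induction k generalizing x with
  | zero => simp_all
  | succ k ih =>
    exact mem_growthLE_of_sub_smul_apply_mem hμ (ih (by rwa [← mul_apply, ← pow_succ]))

theorem apply_eq_zero_of_pow_apply_eq_zero {R M : Type*} [Semiring R] [AddCommMonoid M]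
    [Module R M] {g : Module.End R M} (hg : ∀ z, g (g z) = 0 → g z = 0) :
    ∀ (k : ℕ) {x : M}, (g ^ k) x = 0 → g x = 0
  | 0, x, hx => by simp_all
  | k + 1, x, hx =>
    hg x (apply_eq_zero_of_pow_apply_eq_zero hg k (by rwa [← mul_apply, ← pow_succ]))

theorem growthLE_eq_top [IsAlgClosed 𝕜] [FiniteDimensional 𝕜 E]
    (heig : ∀ μ, f.HasEigenvalue μ → ‖μ‖ ≤ lam)
    (hss : ∀ μ : 𝕜, ‖μ‖ = lam → ∀ x, (f - μ • 1) ((f - μ • 1) x) = 0 → (f - μ • 1) x = 0) :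
    growthLE f lam = ⊤ := by
  rw [eq_top_iff, ← iSup_maxGenEigenspace_eq_top f, iSup_le_iff]
  intro μ
  rcases lt_trichotomy ‖μ‖ lam with hlt | heq | hgt
  · exact maxGenEigenspace_le_growthLE_of_norm_lt hlt
  · intro x hx
    obtain ⟨k, hk⟩ := (mem_maxGenEigenspace f μ x).1 hx
    refine eigenspace_le_growthLE heq.le ?_
    rw [mem_eigenspace_iff, ← sub_eq_zero]
    simpa using apply_eq_zero_of_pow_apply_eq_zero (hss μ heq) k hk
  · have hbot : f.maxGenEigenspace μ = ⊥ := by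
      by_contra h
      exact (heig μ (HasUnifEigenvalue.lt zero_lt_one h)).not_gt hgt
    simp [hbot]

end Module.End

noncomputable def cesaroMean (a : ℕ → ℝ) (N : ℕ) : ℝ := (N : ℝ)⁻¹ * ∑ k ∈ Finset.range N, a k

theorem cesaroMean_mono {a b : ℕ → ℝ} (h : ∀ k, a k ≤ b k) (N : ℕ) :
    cesaroMean a N ≤ cesaroMean b N :=
  mul_le_mul_of_nonneg_left (Finset.sum_le_sum fun k _ => h k) (by positivity)

theorem cesaroMean_const_mul (c : ℝ) (a : ℕ → ℝ) (N : ℕ) :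
    cesaroMean (fun k => c * a k) N = c * cesaroMean a N := by
  simp only [cesaroMean, ← Finset.mul_sum]
  ring

theorem tendsto_cesaroMean_succ {a : ℕ → ℝ} {L : ℝ}
    (h : Tendsto (cesaroMean a) atTop (nhds L)) :
    Tendsto (cesaroMean fun k => a (k + 1)) atTop (nhds L) := by
  have hshift : Tendsto (fun N : ℕ => (1 + (N : ℝ)⁻¹) * cesaroMean a (N + 1) - (N : ℝ)⁻¹ * a 0)
      atTop (nhds ((1 + 0) * L - 0 * a 0)) :=
    ((tendsto_const_nhds.add tendsto_inv_atTop_nhds_zero_nat).mul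
      (h.comp (tendsto_add_atTop_nat 1))).sub (tendsto_inv_atTop_nhds_zero_nat.mul_const _)
  rw [add_zero, one_mul, zero_mul, sub_zero] at hshift
  refine hshift.congr' ?_
  filter_upwards [eventually_ge_atTop 1] with N hN
  simp only [cesaroMean, Finset.sum_range_succ' a N]
  push_cast
  field_simp
  ring

theorem le_of_tendsto_cesaroMean {a : ℕ → ℝ} {L c : ℝ} {n : ℕ}
    (h : Tendsto (cesaroMean a) atTop (nhds L)) (hc : ∀ k, n ≤ k → a k ≤ c) : L ≤ c := by
  set D := ∑ k ∈ Finset.range n, a k - n * c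
  have hbound : ∀ N, n + 1 ≤ N → cesaroMean a N ≤ (N : ℝ)⁻¹ * D + c := by
    intro N hN
    have hN0 : (N : ℝ) ≠ 0 := Nat.cast_ne_zero.2 (by omega)
    have htail : ∑ k ∈ Finset.Ico n N, a k ≤ ∑ _k ∈ Finset.Ico n N, c :=
      Finset.sum_le_sum fun k hk => hc k (Finset.mem_Ico.1 hk).1
    rw [Finset.sum_const, Nat.card_Ico, nsmul_eq_mul, Nat.cast_sub (by omega)] at htail
    have hsum : ∑ k ∈ Finset.range N, a k ≤ D + N * c := by
      rw [← Finset.sum_range_add_sum_Ico a (by omega : n ≤ N)]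
      linarith
    calc cesaroMean a N ≤ (N : ℝ)⁻¹ * (D + N * c) :=
          mul_le_mul_of_nonneg_left hsum (by positivity)
      _ = (N : ℝ)⁻¹ * D + c := by rw [mul_add, inv_mul_cancel_left₀ hN0]
  refine le_of_tendsto_of_tendsto h ?_ (eventually_atTop.2 ⟨n + 1, hbound⟩)
  simpa using tendsto_inv_atTop_nhds_zero_nat.mul_const D |>.add_const c

section PathCount

variable {V : Type*} [Fintype V] [DecidableEq V] {M : Matrix V V ℕ}

theorem pathCount_add (v : V) (n m : ℕ) :
    pathCount M v (n + m) = ∑ w, (M ^ n) v w * pathCount M w m := by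
  simp only [pathCount, pow_add, ← Matrix.mulVec_mulVec]
  rfl

theorem pathCount_eq_sum (v : V) (n : ℕ) : pathCount M v n = ∑ w, (M ^ n) v w := by
  simp [pathCount, Matrix.mulVec, dotProduct]

theorem pathCount_le_pathCount_succ {v w : V} (h : M v w ≠ 0) (n : ℕ) :
    pathCount M w n ≤ pathCount M v (n + 1) := by
  rw [add_comm, pathCount_add, pow_one]
  calc pathCount M w n ≤ M v w * pathCount M w n := Nat.le_mul_of_pos_left _ (Nat.pos_of_ne_zero h)
    _ ≤ ∑ u, M v u * pathCount M u n :=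
      Finset.single_le_sum (f := fun u => M v u * pathCount M u n) (fun _ _ => Nat.zero_le _)
        (Finset.mem_univ w)

theorem pathCount_add_le {B lam : ℝ} (hB : ∀ w m, (pathCount M w m : ℝ) ≤ B * lam ^ m)
    (v : V) (n m : ℕ) : (pathCount M v (n + m) : ℝ) ≤ pathCount M v n * (B * lam ^ m) := by
  rw [pathCount_add, pathCount_eq_sum (n := n)]
  push_cast
  rw [Finset.sum_mul]
  exact Finset.sum_le_sum fun w _ => mul_le_mul_of_nonneg_left (hB w m) (Nat.cast_nonneg _)

theorem AlmostSemisimple.exists_pathCount_le {v0 : V} {lam : ℝ}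
    (h : AlmostSemisimple M v0 lam) :
    ∃ B : ℝ, 0 < B ∧ ∀ (v : V) (n : ℕ), (pathCount M v n : ℝ) ≤ B * lam ^ n := by
  set A : Matrix V V ℂ := M.map (Nat.castRingHom ℂ)
  have hsub : ∀ μ : ℂ, Matrix.toLin' A - μ • 1 = Matrix.toLin' (A - μ • 1) := by
    intro μ
    rw [map_sub, map_smul, Matrix.toLin'_one]
    rfl
  have htop : Module.End.growthLE (Matrix.toLin' A) lam = ⊤ := by
    refine Module.End.growthLE_eq_top (fun μ hμ => h.eigen_le μ ?_) fun μ hμ x hx => ?_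
    · rwa [Module.End.hasEigenvalue_iff_isRoot_charpoly, Matrix.charpoly_toLin'] at hμ
    · simp only [hsub, Matrix.toLin'_apply] at hx ⊢
      exact h.semisimple_top μ hμ x hx
  obtain ⟨C, hC⟩ := Module.End.mem_growthLE_iff.1 (htop ▸ Submodule.mem_top :
    (fun _ => (1 : ℂ)) ∈ Module.End.growthLE (Matrix.toLin' A) lam)
  have hlam : 0 < lam := zero_lt_one.trans h.growth_gt_one
  refine ⟨max C 1, by positivity, fun v n => ?_⟩
  have hcount : (Matrix.toLin' A ^ n) (fun _ => 1) v = (pathCount M v n : ℂ) := by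
    rw [← Matrix.toLin'_pow, Matrix.toLin'_apply, ← Matrix.map_pow, pathCount]
    simpa [Function.comp_def] using
      (RingHom.map_mulVec (Nat.castRingHom ℂ) (M ^ n) (fun _ => 1) v).symm
  calc (pathCount M v n : ℝ) = ‖(Matrix.toLin' A ^ n) (fun _ => 1) v‖ := by
        rw [hcount, Complex.norm_natCast]
    _ ≤ C * lam ^ n := (norm_le_pi_norm _ v).trans (hC n)
    _ ≤ max C 1 * lam ^ n := by gcongr; exact le_max_left _ _

variable {lam : ℝ} {ρ1 : V → ℝ}

theorem IsRho1.nonneg_s14 (hρ : IsRho1 M lam ρ1) (hlam : 0 ≤ lam) (v : V) : 0 ≤ ρ1 v :=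
  ge_of_tendsto' (hρ v) fun N => by positivity

theorem IsRho1.le_mul_of_ne_zero (hρ : IsRho1 M lam ρ1) (hlam : 0 < lam) {v w : V}
    (h : M v w ≠ 0) : ρ1 w ≤ lam * ρ1 v := by
  have hstep : ∀ k, (pathCount M w k : ℝ) / lam ^ k ≤
      lam * ((pathCount M v (k + 1) : ℝ) / lam ^ (k + 1)) := by
    intro k
    rw [pow_succ, mul_div_assoc', mul_comm (lam ^ k), ← div_div, mul_div_cancel_left₀ _ hlam.ne']
    gcongr
    exact_mod_cast pathCount_le_pathCount_succ h k
  refine le_of_tendsto_of_tendsto' (hρ w) ((tendsto_cesaroMean_succ (hρ v)).const_mul lam)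
    fun N => ?_
  exact (cesaroMean_mono hstep N).trans_eq (cesaroMean_const_mul _ _ N)

theorem IsRho1.mul_pow_le_mul_pathCount (hρ : IsRho1 M lam ρ1) (hlam : 0 < lam) {B : ℝ}
    (hB : ∀ w m, (pathCount M w m : ℝ) ≤ B * lam ^ m) (v : V) (n : ℕ) :
    ρ1 v * lam ^ n ≤ B * pathCount M v n := by
  have hρn : ρ1 v ≤ B * (pathCount M v n / lam ^ n) := by
    refine le_of_tendsto_cesaroMean (hρ v) (n := n) fun k hk => ?_
    obtain ⟨m, rfl⟩ := Nat.exists_eq_add_of_le hk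
    rw [div_le_iff₀ (by positivity), pow_add]
    calc (pathCount M v (n + m) : ℝ) ≤ pathCount M v n * (B * lam ^ m) := pathCount_add_le hB v n m
      _ = B * (pathCount M v n / lam ^ n) * (lam ^ n * lam ^ m) := by field_simp
  calc ρ1 v * lam ^ n ≤ B * (pathCount M v n / lam ^ n) * lam ^ n := by gcongr
    _ = B * pathCount M v n := by field_simp

end PathCount

section Paths

variable {V E : Type*} (src tgt : E → V)

theorem isPath_nil (v : V) : IsPath src tgt v [] := ⟨List.isChain_nil, by simp⟩

variable {src tgt} in
theorem isPath_cons {v : V} {e : E} {l : List E} :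
    IsPath src tgt v (e :: l) ↔ src e = v ∧ IsPath src tgt (tgt e) l := by
  constructor
  · rintro ⟨hchain, hhead⟩
    obtain ⟨hlink, hchain⟩ := List.isChain_cons.1 hchain
    exact ⟨hhead e rfl, hchain, fun f hf => (hlink f hf).symm⟩
  · rintro ⟨rfl, hchain, hhead⟩
    refine ⟨List.isChain_cons.2 ⟨fun f hf => (hhead f hf).symm, hchain⟩, ?_⟩
    simp

theorem endV_cons (v : V) (e : E) (l : List E) : endV tgt v (e :: l) = endV tgt (tgt e) l := by
  cases l <;> simp [endV, List.getLast?_cons]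

variable [DecidableEq V] [Fintype E]

theorem sum_filter_src_eq_sum_adjM [Fintype V] (g : V → ℕ) (v : V) :
    ∑ e ∈ Finset.univ.filter (fun e => src e = v), g (tgt e) = ∑ w, adjM src tgt v w * g w := by
  rw [← Finset.sum_fiberwise' _ tgt g]
  refine Finset.sum_congr rfl fun w _ => ?_
  rw [Finset.sum_const, smul_eq_mul, Finset.filter_filter]
  rfl

theorem adjM_src_tgt_ne_zero [Fintype V] (e : E) : adjM src tgt (src e) (tgt e) ≠ 0 :=
  Finset.card_ne_zero_of_mem (Finset.mem_filter.2 ⟨Finset.mem_univ e, rfl, rfl⟩)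

variable [DecidableEq E]

def pathFinset : ℕ → V → Finset (List E)
  | 0, _ => {[]}
  | n + 1, v => (Finset.univ.filter fun e => src e = v).biUnion
      fun e => (pathFinset n (tgt e)).image (e :: ·)

theorem mem_pathFinset {n : ℕ} {v : V} {l : List E} :
    l ∈ pathFinset src tgt n v ↔ IsPath src tgt v l ∧ l.length = n := by
  induction n generalizing v l with
  | zero =>
    simp only [pathFinset, Finset.mem_singleton, List.length_eq_zero_iff]
    constructor
    · rintro rfl
      exact ⟨isPath_nil src tgt v, rfl⟩
    · rintro ⟨-, rfl⟩
      rfl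
  | succ n ih =>
    cases l with
    | nil => simp [pathFinset]
    | cons e l =>
      simp [pathFinset, ih, isPath_cons, and_assoc]

theorem card_pathFinset [Fintype V] (n : ℕ) (v : V) :
    (pathFinset src tgt n v).card = pathCount (adjM src tgt) v n := by
  induction n generalizing v with
  | zero => simp [pathFinset, pathCount]
  | succ n ih =>
    rw [pathFinset, Finset.card_biUnion, add_comm, pathCount_add, pow_one,
      ← sum_filter_src_eq_sum_adjM]
    · refine Finset.sum_congr rfl fun e _ => ?_
      rw [Finset.card_image_of_injective _ List.cons_injective, ih]
    · intro e _ f _ hef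
      refine Finset.disjoint_left.2 fun l hle hlf => hef ?_
      obtain ⟨le, -, rfl⟩ := Finset.mem_image.1 hle
      obtain ⟨lf, -, hl⟩ := Finset.mem_image.1 hlf
      exact (List.cons.inj hl).1.symm
theorem coe_pathFinset (n : ℕ) (v : V) :
    (pathFinset src tgt n v : Set (List E)) = {l | IsPath src tgt v l ∧ l.length = n} := by
  ext l
  simp [mem_pathFinset]

theorem coe_pathFinset_filter (n : ℕ) (v : V) (p : List E → Prop) [DecidablePred p] :
    ((pathFinset src tgt n v).filter p : Set (List E)) =
      {l | IsPath src tgt v l ∧ l.length = n ∧ p l} := by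
  ext l
  simp [mem_pathFinset, and_assoc]

end Paths

section Telescoping

variable {V E : Type*} {src tgt : E → V} {lam : ℝ} {ρ : V → ℝ}

theorem IsPath.apply_endV_eq_zero (hρ0 : ∀ v, 0 ≤ ρ v) (hedge : ∀ e, ρ (tgt e) ≤ lam * ρ (src e))
    {v : V} {l : List E} (hl : IsPath src tgt v l) (hv : ρ v = 0) : ρ (endV tgt v l) = 0 := by
  induction l generalizing v with
  | nil => simpa [endV] using hv
  | cons e l ih =>
    obtain ⟨rfl, htail⟩ := isPath_cons.1 hl
    rw [endV_cons]
    exact ih htail (le_antisymm (by simpa [hv] using hedge e) (hρ0 _))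

/-- The Markov weight of a path telescopes: `ℙⁿ({l}) = ρ(𝟙)_{end l} / (ρ(𝟙)_v λⁿ)`. -/
theorem IsPath.prod_map_mul_eq {μe : E → ℝ} (hlam : lam ≠ 0) (hρ0 : ∀ v, 0 ≤ ρ v)
    (hedge : ∀ e, ρ (tgt e) ≤ lam * ρ (src e))
    (hμ : ∀ e, 0 < ρ (src e) → μe e = ρ (tgt e) / (lam * ρ (src e)))
    {v : V} {l : List E} (hl : IsPath src tgt v l) (hv : 0 < ρ v) :
    (l.map μe).prod * (ρ v * lam ^ l.length) = ρ (endV tgt v l) := by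
  induction l generalizing v with
  | nil => simp [endV]
  | cons e l ih =>
    obtain ⟨rfl, htail⟩ := isPath_cons.1 hl
    have hstep : (List.map μe (e :: l)).prod * (ρ (src e) * lam ^ (e :: l).length) =
        (l.map μe).prod * (ρ (tgt e) * lam ^ l.length) := by
      rw [List.map_cons, List.prod_cons, List.length_cons, hμ e hv, pow_succ]
      field_simp
    rw [hstep, endV_cons]
    rcases (hρ0 (tgt e)).lt_or_eq with hpos | hzero
    · exact ih htail hpos
    · rw [← hzero, htail.apply_endV_eq_zero hρ0 hedge hzero.symm]
      ring

theorem sum_prod_map_eq_sum_div [DecidableEq V] [Fintype E] [DecidableEq E] {μe : E → ℝ}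
    (hlam : lam ≠ 0) (hρ0 : ∀ v, 0 ≤ ρ v) (hedge : ∀ e, ρ (tgt e) ≤ lam * ρ (src e))
    (hμ : ∀ e, 0 < ρ (src e) → μe e = ρ (tgt e) / (lam * ρ (src e)))
    {v : V} (hv : 0 < ρ v) (n : ℕ) (p : List E → Prop) [DecidablePred p] :
    ∑ l ∈ (pathFinset src tgt n v).filter p, (l.map μe).prod =
      (∑ l ∈ (pathFinset src tgt n v).filter (fun l => p l ∧ 0 < ρ (endV tgt v l)),
        ρ (endV tgt v l)) / (ρ v * lam ^ n) := by
  rw [Finset.sum_div, ← Finset.filter_filter,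
    Finset.sum_filter_of_ne (p := fun l => 0 < ρ (endV tgt v l))]
  · refine Finset.sum_congr rfl fun l hl => ?_
    obtain ⟨hpath, rfl⟩ := (mem_pathFinset src tgt).1 (Finset.mem_filter.1 hl).1
    exact eq_div_of_mul_eq (by positivity) (hpath.prod_map_mul_eq hlam hρ0 hedge hμ hv)
  · intro l _ hl
    exact (hρ0 _).lt_of_ne (Ne.symm (left_ne_zero_of_mul hl))

end Telescoping

/-- `#T / D` stands for the counting measure and `(∑ w) / (r x)` for the Markov measure; weights lie
in `[a, b]` and `D` is comparable to `x` through `r x ≤ B D` and `D ≤ B x`. -/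
theorem card_div_comparable_sum_div {ι : Type*} (T : Finset ι) (w : ι → ℝ) {r x D B a b c : ℝ}
    (hr : 0 < r) (hx : 0 < x) (hB : 0 < B) (ha : 0 < a)
    (hw : ∀ i ∈ T, a ≤ w i ∧ w i ≤ b) (hlow : r * x ≤ B * D) (hup : D ≤ B * x)
    (hc₁ : B * b / r ≤ c) (hc₂ : B / a ≤ c) :
    c⁻¹ * ((∑ i ∈ T, w i) / (r * x)) ≤ T.card / D ∧
      (T.card : ℝ) / D ≤ c * ((∑ i ∈ T, w i) / (r * x)) := by
  set k : ℝ := (T.card : ℝ)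
  set s := ∑ i ∈ T, w i
  have hk : 0 ≤ k := Nat.cast_nonneg _
  have hsk : a * k ≤ s := by
    simpa [k, mul_comm] using Finset.card_nsmul_le_sum T w a fun i hi => (hw i hi).1
  have hks : s ≤ b * k := by
    simpa [k, mul_comm] using Finset.sum_le_card_nsmul T w b fun i hi => (hw i hi).2
  have hs : 0 ≤ s := (mul_nonneg ha.le hk).trans hsk
  have hrx : 0 < r * x := mul_pos hr hx
  have hD : 0 < D := pos_of_mul_pos_right (hrx.trans_le hlow) hB.le
  have hc : 0 < c := (div_pos hB ha).trans_le hc₂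
  have hmarkov : s / (r * x) ≤ B * b / r * (k / D) := by
    rw [div_mul_div_comm, div_le_div_iff₀ hrx (mul_pos hr hD)]
    nlinarith [mul_le_mul_of_nonneg_left hup (hs.trans hks),
      mul_le_mul_of_nonneg_right hks (mul_pos hr hD).le]
  have hcount : k / D ≤ B / a * (s / (r * x)) := by
    rw [div_mul_div_comm, div_le_div_iff₀ hD (mul_pos ha hrx)]
    nlinarith [mul_le_mul_of_nonneg_left hlow hk]
  constructor
  · rw [inv_mul_le_iff₀ hc]
    exact hmarkov.trans (by gcongr)
  · exact hcount.trans (by gcongr)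

theorem exists_pos_le_of_pos {V : Type*} [Finite V] [Nonempty V] (f : V → ℝ) :
    ∃ a, 0 < a ∧ ∀ v, 0 < f v → a ≤ f v := by
  obtain ⟨v, hv⟩ := Finite.exists_min fun v => if 0 < f v then f v else 1
  refine ⟨if 0 < f v then f v else 1, by split_ifs <;> simp_all, fun w hw => ?_⟩
  simpa [hw] using hv w

theorem counting_vs_markov_measure_general {V E : Type*} [Fintype V] [DecidableEq V]
    [Fintype E] [DecidableEq E] (src tgt : E → V) (v0 : V) (lam : ℝ)
    (hAS : AlmostSemisimple (adjM src tgt) v0 lam)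
    (ρ1 : V → ℝ) (hρ : IsRho1 (adjM src tgt) lam ρ1) (hv0 : 0 < ρ1 v0)
    (μe : E → ℝ)
    (hμ : ∀ e, 0 < ρ1 (src e) →
      μe e = ρ1 (tgt e) / (lam * ρ1 (src e))) :
    ∃ c : ℝ, 1 < c ∧ ∀ (n : ℕ) (A : Set (List E)),
      c⁻¹ * (∑ᶠ l ∈ {l : List E | IsPath src tgt v0 l ∧ l.length = n ∧ l ∈ A},
          (l.map μe).prod) ≤
        (Nat.card {l : List E | IsPath src tgt v0 l ∧ l.length = n ∧ l ∈ A ∧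
            0 < ρ1 (endV tgt v0 l)} : ℝ) /
          (Nat.card {l : List E | IsPath src tgt v0 l ∧ l.length = n} : ℝ) ∧
      (Nat.card {l : List E | IsPath src tgt v0 l ∧ l.length = n ∧ l ∈ A ∧
            0 < ρ1 (endV tgt v0 l)} : ℝ) /
          (Nat.card {l : List E | IsPath src tgt v0 l ∧ l.length = n} : ℝ) ≤
        c * (∑ᶠ l ∈ {l : List E | IsPath src tgt v0 l ∧ l.length = n ∧ l ∈ A},
          (l.map μe).prod) := by
  classical
  have hlam : 0 < lam := zero_lt_one.trans hAS.growth_gt_one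
  obtain ⟨B, hB0, hB⟩ := hAS.exists_pathCount_le
  have hρ0 : ∀ v, 0 ≤ ρ1 v := hρ.nonneg_s14 hlam.le
  have hedge : ∀ e, ρ1 (tgt e) ≤ lam * ρ1 (src e) :=
    fun e => hρ.le_mul_of_ne_zero hlam (adjM_src_tgt_ne_zero src tgt e)
  have : Nonempty V := ⟨v0⟩
  obtain ⟨a, ha, hmin⟩ := exists_pos_le_of_pos ρ1
  obtain ⟨vmax, hmax⟩ := Finite.exists_max ρ1
  have hc₁ : 0 ≤ B * ρ1 vmax / ρ1 v0 := div_nonneg (mul_nonneg hB0.le (hρ0 vmax)) hv0.le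
  have hc₂ : 0 < B / a := div_pos hB0 ha
  refine ⟨1 + B * ρ1 vmax / ρ1 v0 + B / a, lt_add_of_le_of_pos (le_add_of_nonneg_right hc₁) hc₂,
    fun n A => ?_⟩
  rw [← coe_pathFinset_filter, ← coe_pathFinset_filter, ← coe_pathFinset, finsum_mem_coe_finset,
    Nat.card_coe_set_eq, Nat.card_coe_set_eq, Set.ncard_coe_finset, Set.ncard_coe_finset,
    card_pathFinset, sum_prod_map_eq_sum_div hlam.ne' hρ0 hedge hμ hv0]
  refine card_div_comparable_sum_div _ _ hv0 (pow_pos hlam n) hB0 ha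
    (fun l hl => ⟨hmin _ (Finset.mem_filter.1 hl).2.2, hmax _⟩)
    (hρ.mul_pow_le_mul_pathCount hlam hB v0 n) (hB v0 n)
    (le_add_of_le_of_nonneg (le_add_of_nonneg_left zero_le_one) hc₂.le)
    (le_add_of_nonneg_left (add_nonneg zero_le_one hc₁))

/-- comparison between the `n`-step Markov measure `ℙⁿ` and the uniform
counting measure `Pⁿ` on the sphere `S_n` of the universal cover: there is `c > 1`
with `c⁻¹·ℙⁿ(A) ≤ Pⁿ(A ∩ LG) ≤ c·ℙⁿ(A)` for every subset `A`, where `LG` is the set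
of paths ending at a large-growth vertex. -/
theorem counting_vs_markov_measure {V E : Type*} [Fintype V] [DecidableEq V]
    [Fintype E] [DecidableEq E] (src tgt : E → V) (v0 : V) (lam : ℝ)
    (hAS : AlmostSemisimple (adjM src tgt) v0 lam)
    (ρ1 : V → ℝ) (hρ : IsRho1 (adjM src tgt) lam ρ1) (hv0 : 0 < ρ1 v0)
    (μe : E → ℝ) (hμ0 : ∀ e, 0 ≤ μe e)
    (hμ : ∀ e, 0 < ρ1 (src e) →
      μe e = ρ1 (tgt e) / (lam * ρ1 (src e))) :
    ∃ c : ℝ, 1 < c ∧ ∀ (n : ℕ) (A : Set (List E)),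
      c⁻¹ * (∑ᶠ l ∈ {l : List E | IsPath src tgt v0 l ∧ l.length = n ∧ l ∈ A},
          (l.map μe).prod) ≤
        (Nat.card {l : List E | IsPath src tgt v0 l ∧ l.length = n ∧ l ∈ A ∧
            0 < ρ1 (endV tgt v0 l)} : ℝ) /
          (Nat.card {l : List E | IsPath src tgt v0 l ∧ l.length = n} : ℝ) ∧
      (Nat.card {l : List E | IsPath src tgt v0 l ∧ l.length = n ∧ l ∈ A ∧
            0 < ρ1 (endV tgt v0 l)} : ℝ) /
          (Nat.card {l : List E | IsPath src tgt v0 l ∧ l.length = n} : ℝ) ≤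
        c * (∑ᶠ l ∈ {l : List E | IsPath src tgt v0 l ∧ l.length = n ∧ l ∈ A},
          (l.map μe).prod) :=
  counting_vs_markov_measure_general src tgt v0 lam hAS ρ1 hρ hv0 μe hμ
end

section
/- Let G be a hyperbolic group with geodesic combing graph Γ and spheres S_n with #S_n ≍ λⁿ. For g ∈ S_n write canonically g = ab where a ∈ S_{n₁}, b ∈ S_{n₂}, n₁ = ⌊n/2⌋, n₂ = n − n₁, and b lies in the cone of a. Then there exists c > 0, independent of n, such that for all subsets A, B ⊆ G: Pⁿ(a ∈ A and b ∈ B) ≤ c·P^{n₁}(A)·P^{n₂}(B). -/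
/-- Running the combing automaton from a state along a word. -/
def run {V G : Type*} (tr : V → G → Option V) : V → List G → Option V
  | v, [] => some v
  | v, a :: l => (tr v a).bind fun w => run tr w l

lemma run_append {V G : Type*} (tr : V → G → Option V) (v : V) (l₁ l₂ : List G) :
    run tr v (l₁ ++ l₂) = (run tr v l₁).bind fun w => run tr w l₂ := by
  induction l₁ generalizing v with
  | nil => simp [run]
  | cons a l ih =>
    simp only [List.cons_append, run]
    cases tr v a with
    | none => simp
    | some w => simp [ih]

lemma wordLength_le {G : Type*} [Group G] (S : Set G) (l : List G)
    (h : ∀ x ∈ l, x ∈ S) : wordLength S l.prod ≤ l.length :=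
  Nat.sInf_le ⟨l, rfl, h, rfl⟩

lemma wordLength_exists {G : Type*} [Group G] (S : Set G)
    (hgen : ∀ g : G, ∃ l : List G, (∀ x ∈ l, x ∈ S) ∧ l.prod = g) (g : G) :
    ∃ l : List G, l.length = wordLength S g ∧ (∀ x ∈ l, x ∈ S) ∧ l.prod = g := by
  obtain ⟨l, hl, hp⟩ := hgen g
  exact Nat.sInf_mem (⟨l.length, l, rfl, hl, hp⟩ :
    {n | ∃ l : List G, l.length = n ∧ (∀ x ∈ l, x ∈ S) ∧ l.prod = g}.Nonempty)

lemma wordLength_mul_le_s17 {G : Type*} [Group G] (S : Set G)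
    (hgen : ∀ g : G, ∃ l : List G, (∀ x ∈ l, x ∈ S) ∧ l.prod = g) (a b : G) :
    wordLength S (a * b) ≤ wordLength S a + wordLength S b := by
  obtain ⟨l₁, h1, hm1, hp1⟩ := wordLength_exists S hgen a
  obtain ⟨l₂, h2, hm2, hp2⟩ := wordLength_exists S hgen b
  have := wordLength_le S (l₁ ++ l₂) (by
    intro x hx
    rcases List.mem_append.mp hx with h | h
    · exact hm1 x h
    · exact hm2 x h)
  rw [List.prod_append, hp1, hp2, List.length_append, h1, h2] at this
  exact this

/-- with `n₁ = ⌊n/2⌋`, `n₂ = n − n₁`, and the canonical decomposition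
`g = ab` of `g ∈ S_n` given by splitting its combing geodesic (so `a ∈ S_{n₁}`,
`b ∈ S_{n₂}`, `b` in the cone of `a`), there is `c > 0`, independent of `n`, such that
for all `A, B ⊆ G`:  `Pⁿ(a ∈ A and b ∈ B) ≤ c·P^{n₁}(A)·P^{n₂}(B)`, where `Pᵐ` is the
uniform measure on the sphere `S_m` of `G`. -/
theorem splitting_almost_independent {G V : Type*} [Group G] [Fintype V]
    (S : Finset G)
    (hgen : ∀ g : G, ∃ l : List G, (∀ x ∈ l, x ∈ (S : Set G)) ∧ l.prod = g)
    (v0 : V) (tr : V → G → Option V)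
    (hgeo : ∀ l : List G, (∀ x ∈ l, x ∈ (S : Set G)) → (run tr v0 l).isSome →
      wordLength (S : Set G) l.prod = l.length)
    (huniq : ∀ g : G, ∃! l : List G,
      (∀ x ∈ l, x ∈ (S : Set G)) ∧ (run tr v0 l).isSome ∧ l.prod = g)
    (lam c₀ : ℝ) (hlam : 1 < lam) (hc₀ : 1 ≤ c₀)
    (hcoor : ∀ m : ℕ,
      c₀⁻¹ * lam ^ m ≤ (Nat.card {g : G | wordLength (S : Set G) g = m} : ℝ) ∧
      (Nat.card {g : G | wordLength (S : Set G) g = m} : ℝ) ≤ c₀ * lam ^ m) :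
    ∃ c : ℝ, 0 < c ∧ ∀ n : ℕ, 2 ≤ n → ∀ A B : Set G,
      (Nat.card {g : G | wordLength (S : Set G) g = n ∧
          ∃ l : List G, (∀ x ∈ l, x ∈ (S : Set G)) ∧ (run tr v0 l).isSome ∧
            l.prod = g ∧ (l.take (n / 2)).prod ∈ A ∧ (l.drop (n / 2)).prod ∈ B} : ℝ) /
          (Nat.card {g : G | wordLength (S : Set G) g = n} : ℝ) ≤
        c * ((Nat.card {g : G | wordLength (S : Set G) g = n / 2 ∧ g ∈ A} : ℝ) /
              (Nat.card {g : G | wordLength (S : Set G) g = n / 2} : ℝ)) *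
          ((Nat.card {g : G | wordLength (S : Set G) g = n - n / 2 ∧ g ∈ B} : ℝ) /
            (Nat.card {g : G | wordLength (S : Set G) g = n - n / 2} : ℝ)) := by
  classical
  have hc₀pos : (0 : ℝ) < c₀ := lt_of_lt_of_le one_pos hc₀
  have hlam0 : (0 : ℝ) < lam := lt_trans one_pos hlam
  have hpos : ∀ m : ℕ, 0 < Nat.card {g : G | wordLength (S : Set G) g = m} := by
    intro m
    have h := (hcoor m).1
    have h0 : (0 : ℝ) < c₀⁻¹ * lam ^ m := by positivity
    exact_mod_cast lt_of_lt_of_le h0 h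
  have hfin : ∀ m : ℕ, Finite {g : G | wordLength (S : Set G) g = m} := by
    intro m
    exact (Nat.card_pos_iff.mp (hpos m)).2
  refine ⟨c₀ ^ 3, by positivity, ?_⟩
  intro n hn A B
  set n₁ := n / 2 with hn₁
  set n₂ := n - n / 2 with hn₂
  have hn12 : n₁ + n₂ = n := Nat.add_sub_cancel' (Nat.div_le_self n 2)
  haveI := hfin n
  haveI := hfin n₁
  haveI := hfin n₂
  set E : Set G := {g : G | wordLength (S : Set G) g = n ∧
    ∃ l : List G, (∀ x ∈ l, x ∈ (S : Set G)) ∧ (run tr v0 l).isSome ∧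
      l.prod = g ∧ (l.take n₁).prod ∈ A ∧ (l.drop n₁).prod ∈ B} with hEdef
  set SA : Set G := {g : G | wordLength (S : Set G) g = n₁ ∧ g ∈ A} with hSAdef
  set SB : Set G := {g : G | wordLength (S : Set G) g = n₂ ∧ g ∈ B} with hSBdef
  haveI : Finite SA := Set.Finite.to_subtype
    ((Set.toFinite {g : G | wordLength (S : Set G) g = n₁}).subset (fun g hg => hg.1))
  haveI : Finite SB := Set.Finite.to_subtype
    ((Set.toFinite {g : G | wordLength (S : Set G) g = n₂}).subset (fun g hg => hg.1))
  haveI : Finite E := Set.Finite.to_subtype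
    ((Set.toFinite {g : G | wordLength (S : Set G) g = n}).subset (fun g hg => hg.1))
  -- counting estimate via an injection E ↪ SA × SB
  have hcard : Nat.card E ≤ Nat.card SA * Nat.card SB := by
    rw [← Nat.card_prod]
    have hmk : ∀ g : E, ∃ p : SA × SB, (p.1 : G) * (p.2 : G) = (g : G) := by
      rintro ⟨g, hwl, l, hmem, hsome, hprod, hA, hB⟩
      have hlen : l.length = n := by
        have h := hgeo l hmem hsome
        rw [hprod, hwl] at h
        exact h.symm
      have hsplit : l.take n₁ ++ l.drop n₁ = l := List.take_append_drop n₁ l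
      -- run is some on the prefix
      have hsome₁ : (run tr v0 (l.take n₁)).isSome := by
        have h := hsome
        rw [← hsplit, run_append] at h
        cases hrt : run tr v0 (l.take n₁) with
        | none => rw [hrt] at h; simp at h
        | some w => simp
      have hmem₁ : ∀ x ∈ l.take n₁, x ∈ (S : Set G) :=
        fun x hx => hmem x (List.take_subset n₁ l hx)
      have hmem₂ : ∀ x ∈ l.drop n₁, x ∈ (S : Set G) :=
        fun x hx => hmem x (List.drop_subset n₁ l hx)
      have hwa : wordLength (S : Set G) (l.take n₁).prod = n₁ := by
        have h := hgeo (l.take n₁) hmem₁ hsome₁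
        rw [List.length_take, hlen, min_eq_left (Nat.div_le_self n 2)] at h
        exact h
      have hwb : wordLength (S : Set G) (l.drop n₁).prod = n₂ := by
        have hle : wordLength (S : Set G) (l.drop n₁).prod ≤ n₂ := by
          have h := wordLength_le (S : Set G) (l.drop n₁) hmem₂
          rw [List.length_drop, hlen] at h
          exact h
        have hge : n₂ ≤ wordLength (S : Set G) (l.drop n₁).prod := by
          have h := wordLength_mul_le_s17 (S : Set G) hgen (l.take n₁).prod (l.drop n₁).prod
          rw [← List.prod_append, hsplit, hprod, hwl, hwa] at h
          omega
        omega
      refine ⟨(⟨(l.take n₁).prod, hwa, hA⟩, ⟨(l.drop n₁).prod, hwb, hB⟩), ?_⟩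
      show (l.take n₁).prod * (l.drop n₁).prod = g
      rw [← List.prod_append, hsplit, hprod]
    choose f hf using hmk
    have hinj : Function.Injective f := by
      intro g g' h
      apply Subtype.ext
      rw [← hf g, ← hf g', h]
    exact Nat.card_le_card_of_injective f hinj
  -- real arithmetic
  set e : ℝ := (Nat.card E : ℝ) with he
  set sa : ℝ := (Nat.card SA : ℝ) with hsa
  set sb : ℝ := (Nat.card SB : ℝ) with hsb
  set s : ℝ := (Nat.card {g : G | wordLength (S : Set G) g = n} : ℝ) with hs
  set s1 : ℝ := (Nat.card {g : G | wordLength (S : Set G) g = n₁} : ℝ) with hs1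
  set s2 : ℝ := (Nat.card {g : G | wordLength (S : Set G) g = n₂} : ℝ) with hs2
  have hspos : (0 : ℝ) < s := by rw [hs]; exact_mod_cast hpos n
  have hs1pos : (0 : ℝ) < s1 := by rw [hs1]; exact_mod_cast hpos n₁
  have hs2pos : (0 : ℝ) < s2 := by rw [hs2]; exact_mod_cast hpos n₂
  have hEab : e ≤ sa * sb := by rw [he, hsa, hsb]; exact_mod_cast hcard
  have hprodbd : s1 * s2 ≤ c₀ ^ 3 * s := by
    have h1 := (hcoor n₁).2
    have h2 := (hcoor n₂).2
    have h3 := (hcoor n).1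
    have hlams : lam ^ n ≤ c₀ * s := by
      have := mul_le_mul_of_nonneg_left h3 (le_of_lt hc₀pos)
      rw [← mul_assoc, mul_inv_cancel₀ (ne_of_gt hc₀pos), one_mul] at this
      exact this
    have hpow : lam ^ n₁ * lam ^ n₂ = lam ^ n := by
      rw [← pow_add, hn12]
    have hstep : s1 * s2 ≤ (c₀ * lam ^ n₁) * (c₀ * lam ^ n₂) :=
      mul_le_mul h1 h2 (le_of_lt hs2pos) (by positivity)
    calc s1 * s2 ≤ (c₀ * lam ^ n₁) * (c₀ * lam ^ n₂) := hstep
      _ = c₀ ^ 2 * (lam ^ n₁ * lam ^ n₂) := by ring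
      _ = c₀ ^ 2 * lam ^ n := by rw [hpow]
      _ ≤ c₀ ^ 2 * (c₀ * s) := by
          exact mul_le_mul_of_nonneg_left hlams (by positivity)
      _ = c₀ ^ 3 * s := by ring
  have hRHS : c₀ ^ 3 * (sa / s1) * (sb / s2) = (c₀ ^ 3 * sa * sb) / (s1 * s2) := by
    field_simp
  calc e / s ≤ (sa * sb) / s := by
        gcongr
    _ ≤ c₀ ^ 3 * (sa / s1) * (sb / s2) := by
        rw [hRHS, div_le_div_iff₀ hspos (by positivity)]
        have hnn : (0 : ℝ) ≤ sa * sb := by positivity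
        nlinarith [mul_le_mul_of_nonneg_left hprodbd hnn]
end
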